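/- Let n ≤ k ≤ 2n. The map V ↦ σV, where (σV)_i = (V_{−i})^⊥, restricts to a bijection from the set of coisotropic points {V ∈ X(k,2n) : (V_{−i})^⊥ ⊆ V_i for all i ∈ ℤ/2nℤ} onto X(2n−k,2n)^{sp}, whose inverse is again given by σ. -/

import Mathlib

open Matrix

/-- The Gram matrix Ω of the symplectic form: Ω_{s,t} = (−1)^{s+1} if s+t = 2n+1
(1-indexed) and 0 otherwise. -/
noncomputable def Omega (n : ℕ) : Matrix (Fin (2*n)) (Fin (2*n)) ℂ :=
  Matrix.of fun s t =>
    if ((s : ℕ) + 1) + ((t : ℕ) + 1) = 2*n + 1 then (-1 : ℂ)^((s : ℕ) + 1 + 1) else 0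

/-- The symplectic bilinear form ⟨v,w⟩ = vᵀ Ω w on ℂ^{2n}. -/
noncomputable def sform (n : ℕ) (v w : Fin (2*n) → ℂ) : ℂ :=
  v ⬝ᵥ (Omega n).mulVec w

/-- The form, as a linear map in its first argument (second argument fixed). -/
noncomputable def sformL (n : ℕ) (w : Fin (2*n) → ℂ) : (Fin (2*n) → ℂ) →ₗ[ℂ] ℂ where
  toFun v := sform n v w
  map_add' a b := by simp [sform, add_dotProduct]
  map_smul' c a := by simp [sform, smul_dotProduct]

/-- Orthogonal complement W^⊥ = {v | ⟨v,w⟩ = 0 for all w ∈ W} w.r.t. the symplectic form. -/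
noncomputable def sperp (n : ℕ) (W : Submodule ℂ (Fin (2*n) → ℂ)) :
    Submodule ℂ (Fin (2*n) → ℂ) :=
  ⨅ w ∈ W, LinearMap.ker (sformL n w)

theorem mem_sperp {n : ℕ} {W : Submodule ℂ (Fin (2*n) → ℂ)} {v : Fin (2*n) → ℂ} :
    v ∈ sperp n W ↔ ∀ w ∈ W, sform n v w = 0 := by
  simp only [sperp, Submodule.mem_iInf, LinearMap.mem_ker]
  exact Iff.rfl

/-- The matrix of the shift map τ₁ : e_j ↦ e_{j+1} (1 ≤ j ≤ 2n−1), e_{2n} ↦ 0. -/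
noncomputable def tauMat (n : ℕ) : Matrix (Fin (2*n)) (Fin (2*n)) ℂ :=
  Matrix.of fun s t => if (s : ℕ) = (t : ℕ) + 1 then 1 else 0

/-- Membership in X(k,2n): a tuple of k-dimensional subspaces of ℂ^{2n} indexed by
ℤ/2nℤ with τ₁(V_i) ⊆ V_{i+1} for all i. -/
def memX (n k : ℕ) (V : ZMod (2*n) → Submodule ℂ (Fin (2*n) → ℂ)) : Prop :=
  (∀ i, Module.finrank ℂ (V i) = k) ∧
  (∀ i, Submodule.map (tauMat n).mulVecLin (V i) ≤ V (i + 1))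


/-- Membership in X(k,2n)^{sp}: points of X(k,2n) with V_i ⊆ (V_{−i})^⊥ for all i. -/
def memXsp (n k : ℕ) (V : ZMod (2*n) → Submodule ℂ (Fin (2*n) → ℂ)) : Prop :=
  memX n k V ∧ ∀ i, V i ≤ sperp n (V (-i))

/-- The map σ: (σV)_i = (V_{−i})^⊥. -/
noncomputable def sigmaMap (n : ℕ) (V : ZMod (2*n) → Submodule ℂ (Fin (2*n) → ℂ)) :
    ZMod (2*n) → Submodule ℂ (Fin (2*n) → ℂ) :=
  fun i => sperp n (V (-i))

/-! The form `⟨v, w⟩ = vᵀ Ω w` is skew-symmetric and nondegenerate, so `W ↦ W^⊥` is an involution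
on subspaces with `dim W^⊥ = 2n - dim W`. The shift `τ₁` is skew-adjoint for it
(`τ₁ᵀ Ω = -Ω τ₁`), hence `τ₁(V_{-i-1}) ⊆ V_{-i}` gives `τ₁(V_{-i}^⊥) ⊆ V_{-i-1}^⊥`. So `σ` maps
`X(k,2n)` into `X(2n-k,2n)`, `σ ∘ σ = id`, and `σ` exchanges the coisotropy condition
`V_{-i}^⊥ ⊆ V_i` with the isotropy condition `(σV)_i ⊆ (σV)_{-i}^⊥`. -/

lemma Fin.eq_rev_comm {m : ℕ} {i j : Fin m} : i = j.rev ↔ j = i.rev := by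
  rw [eq_comm, Fin.rev_eq_iff]

lemma neg_one_pow_val_rev {R : Type*} [Ring R] {m : ℕ} (s : Fin (2 * m)) :
    (-1 : R) ^ (s.rev : ℕ) = -(-1) ^ (s : ℕ) := by
  have hs := s.isLt
  rcases Nat.even_or_odd' (s : ℕ) with ⟨k, hk | hk⟩
  · rw [Fin.val_rev, show 2 * m - ((s : ℕ) + 1) = 2 * (m - k - 1) + 1 by omega, hk]
    simp [pow_succ, pow_mul]
  · rw [Fin.val_rev, show 2 * m - ((s : ℕ) + 1) = 2 * (m - k - 1) by omega, hk]
    simp [pow_succ, pow_mul]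

lemma Omega_apply (n : ℕ) (s t : Fin (2 * n)) :
    Omega n s t = if t = s.rev then (-1) ^ (s : ℕ) else 0 := by
  have hs := s.isLt
  simp only [Omega, of_apply, Fin.ext_iff, Fin.val_rev]
  split_ifs <;> first | omega | ring

lemma Omega_transpose (n : ℕ) : (Omega n)ᵀ = -Omega n := by
  ext s t
  simp only [transpose_apply, Matrix.neg_apply, Omega_apply, Fin.eq_rev_comm (i := s)]
  split_ifs with h
  · rw [h, neg_one_pow_val_rev]
  · rw [neg_zero]

lemma isAdjointPair_neg_tauMat_tauMat (n : ℕ) :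
    Matrix.IsAdjointPair (Omega n) (Omega n) (-tauMat n) (tauMat n) := by
  ext s t
  simp only [mul_apply, transpose_apply, Matrix.neg_apply, Omega_apply, mul_ite, ite_mul,
    mul_zero, zero_mul, Fin.eq_rev_comm (i := t), Finset.sum_ite_eq', Finset.mem_univ, if_true]
  simp only [tauMat, of_apply]
  have hs := s.isLt
  have ht := t.isLt
  have hst : (t.rev : ℕ) = s + 1 ↔ (s.rev : ℕ) = t + 1 := by simp only [Fin.val_rev]; omega
  by_cases h : (t.rev : ℕ) = s + 1
  · rw [if_pos h, if_pos (hst.1 h), h, pow_succ]; ring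
  · rw [if_neg h, if_neg (mt hst.2 h)]; ring

lemma toBilin'_Omega_apply (n : ℕ) (v w : Fin (2 * n) → ℂ) :
    toBilin' (Omega n) v w = sform n v w :=
  toBilin'_apply' _ _ _

lemma sform_swap (n : ℕ) (v w : Fin (2 * n) → ℂ) : sform n w v = -sform n v w := by
  rw [sform, sform, dotProduct_mulVec, dotProduct_comm, ← mulVec_transpose, Omega_transpose,
    neg_mulVec, dotProduct_neg]

lemma isRefl_toBilin'_Omega (n : ℕ) : (toBilin' (Omega n)).IsRefl := fun v w h => by
  rw [toBilin'_Omega_apply] at h ⊢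
  rw [sform_swap, h, neg_zero]

lemma nondegenerate_toBilin'_Omega (n : ℕ) : (toBilin' (Omega n)).Nondegenerate :=
  .ofSeparatingLeft fun v hv => funext fun j => by
    simpa [toBilin'_apply', dotProduct, Omega_apply, Fin.rev_inj] using hv (Pi.single j.rev 1)

lemma sperp_eq_orthogonal (n : ℕ) (W : Submodule ℂ (Fin (2 * n) → ℂ)) :
    sperp n W = (toBilin' (Omega n)).orthogonal W := by
  ext v
  simp only [mem_sperp, LinearMap.BilinForm.mem_orthogonal_iff, toBilin'_Omega_apply,
    sform_swap n v, neg_eq_zero]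

lemma sperp_sperp (n : ℕ) (W : Submodule ℂ (Fin (2 * n) → ℂ)) : sperp n (sperp n W) = W := by
  rw [sperp_eq_orthogonal, sperp_eq_orthogonal]
  exact (toBilin' (Omega n)).orthogonal_orthogonal (nondegenerate_toBilin'_Omega n)
    (isRefl_toBilin'_Omega n) W

lemma finrank_sperp (n : ℕ) (W : Submodule ℂ (Fin (2 * n) → ℂ)) :
    Module.finrank ℂ (sperp n W) = 2 * n - Module.finrank ℂ W := by
  rw [sperp_eq_orthogonal, LinearMap.BilinForm.finrank_orthogonal (nondegenerate_toBilin'_Omega n),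
    Module.finrank_fin_fun]

lemma LinearMap.BilinForm.map_orthogonal_le_of_isAdjointPair {R M : Type*} [CommRing R]
    [AddCommGroup M] [Module R M] {B : LinearMap.BilinForm R M} {f g : M →ₗ[R] M}
    (hfg : LinearMap.IsAdjointPair B B f g) {U V : Submodule R M} (hUV : U.map f ≤ V) :
    (B.orthogonal V).map g ≤ B.orthogonal U := by
  rintro _ ⟨x, hx, rfl⟩
  refine B.mem_orthogonal_iff.2 fun u hu => ?_
  rw [← hfg]
  exact hx (f u) (hUV ⟨u, hu, rfl⟩)

lemma map_tauMat_sperp_le (n : ℕ) {U V : Submodule ℂ (Fin (2 * n) → ℂ)}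
    (hUV : U.map (tauMat n).mulVecLin ≤ V) :
    (sperp n V).map (tauMat n).mulVecLin ≤ sperp n U := by
  have hadj : LinearMap.IsAdjointPair (toBilin' (Omega n)) (toBilin' (Omega n))
      (toLin' (-tauMat n)) (toLin' (tauMat n)) :=
    (isAdjointPair_toLinearMap₂' _ _ _ _).2 (isAdjointPair_neg_tauMat_tauMat n)
  rw [sperp_eq_orthogonal, sperp_eq_orthogonal, ← toLin'_apply']
  refine LinearMap.BilinForm.map_orthogonal_le_of_isAdjointPair hadj ?_
  rwa [map_neg, Submodule.map_neg, toLin'_apply']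

lemma sigmaMap_sigmaMap (n : ℕ) (V : ZMod (2 * n) → Submodule ℂ (Fin (2 * n) → ℂ)) :
    sigmaMap n (sigmaMap n V) = V := by
  funext i
  simp only [sigmaMap, neg_neg, sperp_sperp]

lemma memX_sigmaMap {n k : ℕ} {V : ZMod (2 * n) → Submodule ℂ (Fin (2 * n) → ℂ)}
    (hV : memX n k V) : memX n (2 * n - k) (sigmaMap n V) := by
  obtain ⟨hdim, htau⟩ := hV
  refine ⟨fun i => by rw [sigmaMap, finrank_sperp, hdim], fun i => map_tauMat_sperp_le n ?_⟩
  simpa using htau (-(i + 1))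

lemma isotropic_sigmaMap_iff (n : ℕ) (V : ZMod (2 * n) → Submodule ℂ (Fin (2 * n) → ℂ)) :
    (∀ i, sigmaMap n V i ≤ sperp n (sigmaMap n V (-i))) ↔ ∀ i, sperp n (V (-i)) ≤ V i := by
  simp only [sigmaMap, neg_neg, sperp_sperp]

theorem statement17_general (n k : ℕ) (hk : k ≤ 2*n) :
    (∀ V : ZMod (2*n) → Submodule ℂ (Fin (2*n) → ℂ),
        memX n k V → (∀ i, sperp n (V (-i)) ≤ V i) →
          memXsp n (2*n - k) (sigmaMap n V) ∧ sigmaMap n (sigmaMap n V) = V) ∧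
    (∀ W : ZMod (2*n) → Submodule ℂ (Fin (2*n) → ℂ),
        memXsp n (2*n - k) W →
          (memX n k (sigmaMap n W) ∧ (∀ i, sperp n ((sigmaMap n W) (-i)) ≤ sigmaMap n W i))
            ∧ sigmaMap n (sigmaMap n W) = W) := by
  refine ⟨fun V hV hco => ⟨⟨memX_sigmaMap hV, (isotropic_sigmaMap_iff n V).2 hco⟩,
    sigmaMap_sigmaMap n V⟩, fun W ⟨hW, hiso⟩ => ⟨⟨?_, ?_⟩, sigmaMap_sigmaMap n W⟩⟩
  · simpa [Nat.sub_sub_self hk] using memX_sigmaMap hW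
  · rwa [← isotropic_sigmaMap_iff, sigmaMap_sigmaMap]

/-- for n ≤ k ≤ 2n, σ restricts to a bijection from the set of
coisotropic points of X(k,2n) onto X(2n−k,2n)^{sp}, with inverse again given by σ. -/
theorem statement17 (n k : ℕ) (hn : 1 ≤ n) (hnk : n ≤ k) (hk : k ≤ 2*n) :
    (∀ V : ZMod (2*n) → Submodule ℂ (Fin (2*n) → ℂ),
        memX n k V → (∀ i, sperp n (V (-i)) ≤ V i) →
          memXsp n (2*n - k) (sigmaMap n V) ∧ sigmaMap n (sigmaMap n V) = V) ∧
    (∀ W : ZMod (2*n) → Submodule ℂ (Fin (2*n) → ℂ),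
        memXsp n (2*n - k) W →
          (memX n k (sigmaMap n W) ∧ (∀ i, sperp n ((sigmaMap n W) (-i)) ≤ sigmaMap n W i))
            ∧ sigmaMap n (sigmaMap n W) = W) :=
  statement17_general n k hk
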